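/- Let G be a connected graph of order n and v a vertex of G. Then D(G) − 1 ≤ D(G ⊙ v), where G ⊙ v is the graph obtained from G by removing all edges between any pair of neighbors of v (the vertex v is not removed). -/

import Mathlib

open SimpleGraph

/-- Distinguishing number: least `d` admitting a vertex labeling with `d` labels
preserved only by the identity automorphism. -/
noncomputable def distNum {V : Type*} (G : SimpleGraph V) : ℕ :=
  sInf {d : ℕ | ∃ f : V → Fin d,
    ∀ φ : G ≃g G, (∀ x : V, f (φ x) = f x) → ∀ x : V, φ x = x}

/-- Distinguishing index: least `d` admitting an edge coloring with `d` colors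
preserved only by the identity automorphism. -/
noncomputable def distIdx {V : Type*} (G : SimpleGraph V) : ℕ :=
  sInf {d : ℕ | ∃ f : Sym2 V → Fin d,
    ∀ φ : G ≃g G, (∀ e ∈ G.edgeSet, f (Sym2.map φ e) = f e) → ∀ x : V, φ x = x}

/-- `G ⊙ v`: remove all edges joining two neighbors of `v`. -/
def SimpleGraph.odot {V : Type*} (G : SimpleGraph V) (v : V) : SimpleGraph V :=
  G.deleteEdges {e | ∀ x ∈ e, G.Adj v x}

/-- Vertex contraction `G ∘ v`: delete `v` and put a clique on its neighborhood. -/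
def SimpleGraph.vContract {V : Type*} (G : SimpleGraph V) (v : V) :
    SimpleGraph {u : V // u ≠ v} where
  Adj x y := x ≠ y ∧ (G.Adj x.1 y.1 ∨ (G.Adj v x.1 ∧ G.Adj v y.1))
  symm := by
    constructor
    rintro x y ⟨h1, h2 | ⟨h3, h4⟩⟩
    exacts [⟨h1.symm, Or.inl h2.symm⟩, ⟨h1.symm, Or.inr ⟨h4, h3⟩⟩]
  loopless := ⟨fun x h => h.1 rfl⟩

/-- Edge contraction `G ∘ e` for `e = uv`: merge `v` into `u`. -/
def SimpleGraph.eContract {V : Type*} (G : SimpleGraph V) (u v : V) :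
    SimpleGraph {x : V // x ≠ v} where
  Adj x y := x ≠ y ∧ (G.Adj x.1 y.1 ∨ (x.1 = u ∧ G.Adj v y.1) ∨ (y.1 = u ∧ G.Adj v x.1))
  symm := by
    constructor
    rintro x y ⟨h1, h2⟩
    refine ⟨h1.symm, ?_⟩
    rcases h2 with h | ⟨ha, hb⟩ | ⟨ha, hb⟩
    · exact Or.inl h.symm
    · exact Or.inr (Or.inr ⟨ha, hb⟩)
    · exact Or.inr (Or.inl ⟨ha, hb⟩)
  loopless := ⟨fun x h => h.1 rfl⟩

/-- The star `K_{1,n}`. -/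
def starG (n : ℕ) : SimpleGraph (Fin 1 ⊕ Fin n) := completeBipartiteGraph (Fin 1) (Fin n)

/-- The friendship graph `F_n = K_1 + n K_2`; `none` is the central vertex. -/
def friendshipGraph (n : ℕ) : SimpleGraph (Option (Fin n × Fin 2)) where
  Adj x y := x ≠ y ∧ (x = none ∨ y = none ∨ ∃ i a b, x = some (i, a) ∧ y = some (i, b))
  symm := by
    constructor
    rintro x y ⟨h1, h2⟩
    refine ⟨h1.symm, ?_⟩
    rcases h2 with h | h | ⟨i, a, b, hx, hy⟩
    · exact Or.inr (Or.inl h)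
    · exact Or.inl h
    · exact Or.inr (Or.inr ⟨i, b, a, hy, hx⟩)
  loopless := ⟨fun x h => h.1 rfl⟩

/-- `K_1 + (K_2 ∪ (n-2) K_1)` on `Fin (n+1)`: vertex `0` is the join apex,
vertices `1, 2` form the `K_2`, the rest are the isolated vertices. -/
def joinGraph (n : ℕ) : SimpleGraph (Fin (n + 1)) where
  Adj x y := x ≠ y ∧ (x = 0 ∨ y = 0 ∨ ((x = 1 ∨ x = 2) ∧ (y = 1 ∨ y = 2)))
  symm := by constructor; rintro x y ⟨h1, h2⟩; exact ⟨h1.symm, by tauto⟩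
  loopless := ⟨fun x h => h.1 rfl⟩

/-!
An automorphism of `G` fixing `v` preserves the neighbourhood of `v`, hence also the set of
edges deleted in `G ⊙ v`, so it is an automorphism of `G ⊙ v` as well. Thus a distinguishing
labeling of `G ⊙ v`, with `v` moved to one fresh label, distinguishes `G`: the fresh label
forces every label-preserving automorphism of `G` to fix `v`.
-/

namespace SimpleGraph

variable {V W : Type*} {G : SimpleGraph V} {H : SimpleGraph W}

theorem odot_adj {v a b : V} :
    (G.odot v).Adj a b ↔ G.Adj a b ∧ ¬(G.Adj v a ∧ G.Adj v b) := by
  simp [odot, deleteEdges_adj, Sym2.mem_iff]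

def Iso.odot (φ : G ≃g H) {v : V} {w : W} (hv : φ v = w) : G.odot v ≃g H.odot w where
  toEquiv := φ.toEquiv
  map_rel_iff' {a b} := by
    subst hv
    simp only [odot_adj]
    exact and_congr φ.map_adj_iff (not_congr (and_congr φ.map_adj_iff φ.map_adj_iff))

def IsDistinguishing (G : SimpleGraph V) {α : Type*} (f : V → α) : Prop :=
  ∀ φ : G ≃g G, (∀ x, f (φ x) = f x) → ∀ x, φ x = x

theorem distNum_le {d : ℕ} {f : V → Fin d} (hf : G.IsDistinguishing f) : distNum G ≤ d :=
  Nat.sInf_le ⟨f, hf⟩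

theorem exists_isDistinguishing_distNum [Finite V] (G : SimpleGraph V) :
    ∃ f : V → Fin (distNum G), G.IsDistinguishing f := by
  have := Fintype.ofFinite V
  exact Nat.sInf_mem (s := {d | ∃ f : V → Fin d, G.IsDistinguishing f})
    ⟨Fintype.card V, Fintype.equivFin V, fun φ h x => (Fintype.equivFin V).injective (h x)⟩

theorem IsDistinguishing.of_odot [DecidableEq V] {v : V} {d : ℕ} {f : V → Fin d}
    (hf : (G.odot v).IsDistinguishing f) :
    G.IsDistinguishing fun x => if x = v then Fin.last d else (f x).castSucc := by
  intro φ hφ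
  have hv : φ v = v := by
    by_contra hne
    have := hφ v
    simp only [if_neg hne] at this
    exact (Fin.castSucc_lt_last _).ne this
  refine hf (φ.odot hv) fun x => show f (φ x) = f x from ?_
  rcases eq_or_ne x v with rfl | hx
  · rw [hv]
  · have hφx : φ x ≠ v := fun h => hx (φ.injective (h.trans hv.symm))
    simpa [hx, hφx] using hφ x

theorem distNum_le_distNum_odot_add_one [Finite V] (G : SimpleGraph V) (v : V) :
    distNum G ≤ distNum (G.odot v) + 1 := by
  classical
  obtain ⟨f, hf⟩ := exists_isDistinguishing_distNum (G.odot v)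
  exact distNum_le hf.of_odot

end SimpleGraph

theorem stmt8_general {V : Type*} [Fintype V] (G : SimpleGraph V) (v : V) :
    distNum G - 1 ≤ distNum (G.odot v) :=
  Nat.sub_le_iff_le_add.mpr (G.distNum_le_distNum_odot_add_one v)

theorem stmt8 {V : Type*} [Fintype V] (G : SimpleGraph V) (hc : G.Connected) (v : V) :
    distNum G - 1 ≤ distNum (G.odot v) :=
  stmt8_general G v
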